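/- arXiv:0709.3856 — 3 statements merged into one kernel-verified Lean document; each statement's English description precedes it below -/
import Mathlib

section
/- Let A be a bounded operator on a Hilbert space and z a complex number with dist(z, NumRan(A)) > 0, where NumRan(A) denotes the closure of the numerical range. Then A - z is injective with closed range and ‖(A - z)^{-1}‖ ≤ dist(z, NumRan(A))^{-1} on its range; if moreover z is in the unbounded component of the complement of NumRan(A) or A - z is surjective, then A - z is boundedly invertible with ‖(A - z)^{-1}‖ ≤ dist(z, NumRan(A))^{-1}. -/
/-!
For a unit vector `φ`, `⟨φ, Aφ⟩ - z = ⟨φ, (A - z)φ⟩`, so `dist(z, NumRan A) * ‖ψ‖ ≤ ‖(A - z)ψ‖`: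
`A - z` is bounded below, hence injective with closed range, and any inverse it has is bounded
by `dist(z, NumRan A)⁻¹`. Surjectivity then gives invertibility by the open mapping theorem.
On the unbounded component, the set of `w` for which `A - w` is invertible is open, contains
the points with `‖w‖ > ‖A‖`, and is relatively closed: the a priori bound on the inverse
makes the Neumann-series perturbation radius at least `dist(w, NumRan A)`, which stays away
from `0` near any point off `NumRan A`. Connectedness concludes.
-/

/-- The closure of the numerical range of a bounded operator on a complex Hilbert space. -/
noncomputable def numRanCl {H : Type*} [NormedAddCommGroup H] [InnerProductSpace ℂ H]
    (A : H →L[ℂ] H) : Set ℂ :=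
  closure {w | ∃ ψ : H, ‖ψ‖ = 1 ∧ inner ℂ ψ (A ψ) = w}

open Metric

section NumericalRange

variable {H : Type*} [NormedAddCommGroup H] [InnerProductSpace ℂ H]

theorem infDist_numRanCl_le_norm_apply (A : H →L[ℂ] H) (w : ℂ) {φ : H} (hφ : ‖φ‖ = 1) :
    infDist w (numRanCl A) ≤ ‖(A - w • ContinuousLinearMap.id ℂ H) φ‖ := by
  have hmem : inner ℂ φ (A φ) ∈ numRanCl A := subset_closure ⟨φ, hφ, rfl⟩
  have hinner : inner ℂ φ ((A - w • ContinuousLinearMap.id ℂ H) φ) = inner ℂ φ (A φ) - w := by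
    simp [inner_self_eq_norm_sq_to_K, hφ]
  calc infDist w (numRanCl A) ≤ dist (inner ℂ φ (A φ)) w := by
        rw [dist_comm]; exact infDist_le_dist_of_mem hmem
    _ = ‖inner ℂ φ ((A - w • ContinuousLinearMap.id ℂ H) φ)‖ := by rw [hinner, dist_eq_norm]
    _ ≤ ‖φ‖ * ‖(A - w • ContinuousLinearMap.id ℂ H) φ‖ := norm_inner_le_norm _ _
    _ = ‖(A - w • ContinuousLinearMap.id ℂ H) φ‖ := by rw [hφ, one_mul]

theorem infDist_numRanCl_mul_norm_le (A : H →L[ℂ] H) (w : ℂ) (ψ : H) :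
    infDist w (numRanCl A) * ‖ψ‖ ≤ ‖(A - w • ContinuousLinearMap.id ℂ H) ψ‖ := by
  rcases eq_or_ne ψ 0 with rfl | hψ
  · simp
  have hpos : 0 < ‖ψ‖ := norm_pos_iff.mpr hψ
  have hunit : ‖(‖ψ‖⁻¹ : ℂ) • ψ‖ = 1 := by simp [norm_smul, hpos.ne']
  have h := infDist_numRanCl_le_norm_apply A w hunit
  rw [map_smul, norm_smul, norm_inv, Complex.norm_real, norm_norm, le_inv_mul_iff₀ hpos] at h
  linarith

theorem numRanCl_nonempty [Nontrivial H] (A : H →L[ℂ] H) : (numRanCl A).Nonempty := by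
  obtain ⟨φ, hφ⟩ := exists_norm_eq H zero_le_one
  exact ⟨_, subset_closure ⟨φ, hφ, rfl⟩⟩

end NumericalRange

section Operator

variable {𝕜 E : Type*} [NontriviallyNormedField 𝕜] [NormedAddCommGroup E] [NormedSpace 𝕜 E]

theorem ContinuousLinearMap.norm_units_inv_le_of_bound (u : (E →L[𝕜] E)ˣ) {c : ℝ} (hc : 0 < c)
    (h : ∀ x, c * ‖x‖ ≤ ‖(u : E →L[𝕜] E) x‖) : ‖(↑u⁻¹ : E →L[𝕜] E)‖ ≤ c⁻¹ := by
  refine opNorm_le_bound _ (inv_nonneg.2 hc.le) fun x ↦ (le_inv_mul_iff₀ hc).2 ?_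
  simpa [← mul_apply_eq_comp] using h ((↑u⁻¹ : E →L[𝕜] E) x)

theorem isUnit_sub_smul_id_of_norm_lt [CompleteSpace E] (A : E →L[𝕜] E) {w : 𝕜}
    (hw : ‖A‖ < ‖w‖) : IsUnit (A - w • ContinuousLinearMap.id 𝕜 E) := by
  have hρ : w ∈ resolventSet 𝕜 A := spectrum.mem_resolventSet_of_norm_lt_mul <|
    (mul_le_of_le_one_right (norm_nonneg A) ContinuousLinearMap.norm_id_le).trans_lt hw
  have hneg : A - w • ContinuousLinearMap.id 𝕜 E = -(algebraMap 𝕜 (E →L[𝕜] E) w - A) := by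
    rw [Algebra.algebraMap_eq_smul_one, neg_sub]; rfl
  rw [hneg, IsUnit.neg_iff]
  exact hρ

end Operator

section Resolvent

variable {H : Type*} [NormedAddCommGroup H] [InnerProductSpace ℂ H] [CompleteSpace H]

theorem isUnit_sub_smul_id_of_dist_lt {A : H →L[ℂ] H} {w w' : ℂ}
    (hw' : IsUnit (A - w' • ContinuousLinearMap.id ℂ H))
    (hdist : dist w w' < infDist w' (numRanCl A)) :
    IsUnit (A - w • ContinuousLinearMap.id ℂ H) := by
  obtain ⟨u, hu⟩ := hw'
  nontriviality (H →L[ℂ] H)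
  have hd : 0 < infDist w' (numRanCl A) := dist_nonneg.trans_lt hdist
  have hinv : ‖(↑u⁻¹ : H →L[ℂ] H)‖ ≤ (infDist w' (numRanCl A))⁻¹ :=
    ContinuousLinearMap.norm_units_inv_le_of_bound u hd (hu ▸ infDist_numRanCl_mul_norm_le A w')
  have hnear : ‖(A - w • ContinuousLinearMap.id ℂ H) - u‖ < ‖(↑u⁻¹ : H →L[ℂ] H)‖⁻¹ := by
    calc ‖(A - w • ContinuousLinearMap.id ℂ H) - u‖
        = ‖(w' - w) • ContinuousLinearMap.id ℂ H‖ := by rw [hu]; congr 1; module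
      _ ≤ ‖w' - w‖ * 1 :=
        (norm_smul_le _ _).trans (by gcongr; exact ContinuousLinearMap.norm_id_le)
      _ = dist w w' := by rw [mul_one, dist_comm, dist_eq_norm]
      _ < infDist w' (numRanCl A) := hdist
      _ ≤ ‖(↑u⁻¹ : H →L[ℂ] H)‖⁻¹ := (le_inv_comm₀ (Units.norm_pos _) hd).1 hinv
  exact (u.ofNearby _ hnear).isUnit

theorem isUnit_sub_smul_id_of_not_isBounded {A : H →L[ℂ] H} {z : ℂ} (hz : z ∉ numRanCl A)
    (hunbdd : ¬ Bornology.IsBounded (connectedComponentIn (numRanCl A)ᶜ z)) :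
    IsUnit (A - z • ContinuousLinearMap.id ℂ H) := by
  rcases subsingleton_or_nontrivial H with hH | hH
  · exact isUnit_of_subsingleton _
  set C := connectedComponentIn (numRanCl A)ᶜ z
  set U := {w : ℂ | IsUnit (A - w • ContinuousLinearMap.id ℂ H)}
  have hU : IsOpen U := Units.isOpen.preimage (by fun_prop)
  obtain ⟨w₀, hw₀C, hw₀⟩ : ∃ w₀ ∈ C, ‖A‖ < ‖w₀‖ := by
    by_contra! h
    exact hunbdd (isBounded_iff_forall_norm_le.2 ⟨‖A‖, h⟩)
  have hclosure : closure U ∩ C ⊆ U := by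
    rintro w ⟨hwU, hwC⟩
    have hd : 0 < infDist w (numRanCl A) := (isClosed_closure.notMem_iff_infDist_pos
      (numRanCl_nonempty A)).1 (connectedComponentIn_subset _ _ hwC)
    obtain ⟨w', hw'U, hww'⟩ := Metric.mem_closure_iff.1 hwU _ (half_pos hd)
    refine isUnit_sub_smul_id_of_dist_lt hw'U ?_
    linarith [infDist_le_infDist_add_dist (x := w) (y := w') (s := numRanCl A)]
  exact isPreconnected_connectedComponentIn.subset_of_closure_inter_subset hU
    ⟨w₀, hw₀C, isUnit_sub_smul_id_of_norm_lt A hw₀⟩ hclosure (mem_connectedComponentIn hz)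

end Resolvent

/-- if `dist(z, NumRan(A)) > 0` then `A - z` is injective with closed range and
satisfies the resolvent-type bound on its range; if moreover `z` lies in the unbounded
component of the complement of the (closed) numerical range, or `A - z` is surjective, then
`A - z` is boundedly invertible with `‖(A-z)⁻¹‖ ≤ dist(z, NumRan A)⁻¹`. -/
theorem numRan_resolvent_bound {H : Type*} [NormedAddCommGroup H] [InnerProductSpace ℂ H]
    [CompleteSpace H] (A : H →L[ℂ] H) (z : ℂ)
    (hd : 0 < Metric.infDist z (numRanCl A)) :
    (Function.Injective (A - z • ContinuousLinearMap.id ℂ H) ∧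
      IsClosed (Set.range (A - z • ContinuousLinearMap.id ℂ H)) ∧
      ∀ ψ : H, ‖ψ‖ ≤ (Metric.infDist z (numRanCl A))⁻¹ *
        ‖(A - z • ContinuousLinearMap.id ℂ H) ψ‖) ∧
    ((¬ Bornology.IsBounded (connectedComponentIn (numRanCl A)ᶜ z) ∨
        Function.Surjective (A - z • ContinuousLinearMap.id ℂ H)) →
      ∃ R : H →L[ℂ] H,
        (A - z • ContinuousLinearMap.id ℂ H).comp R = ContinuousLinearMap.id ℂ H ∧
        R.comp (A - z • ContinuousLinearMap.id ℂ H) = ContinuousLinearMap.id ℂ H ∧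
        ‖R‖ ≤ (Metric.infDist z (numRanCl A))⁻¹) := by
  set T := A - z • ContinuousLinearMap.id ℂ H
  have hbelow : ∀ ψ, infDist z (numRanCl A) * ‖ψ‖ ≤ ‖T ψ‖ := infDist_numRanCl_mul_norm_le A z
  have hbound : ∀ ψ, ‖ψ‖ ≤ (infDist z (numRanCl A))⁻¹ * ‖T ψ‖ :=
    fun ψ ↦ (le_inv_mul_iff₀ hd).2 (hbelow ψ)
  have hanti : AntilipschitzWith (infDist z (numRanCl A))⁻¹.toNNReal T :=
    T.antilipschitz_of_bound fun ψ ↦ by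
      rw [Real.coe_toNNReal _ (inv_nonneg.2 hd.le)]; exact hbound ψ
  refine ⟨⟨hanti.injective, hanti.isClosed_range T.uniformContinuous, hbound⟩, fun h ↦ ?_⟩
  have hunit : IsUnit T := h.elim
    (isUnit_sub_smul_id_of_not_isBounded fun hz ↦ hd.ne' (infDist_zero_of_mem hz))
    fun hsurj ↦ ContinuousLinearMap.isUnit_iff_bijective.2 ⟨hanti.injective, hsurj⟩
  obtain ⟨u, hu⟩ := hunit
  exact ⟨↑u⁻¹, hu ▸ u.mul_inv, hu ▸ u.inv_mul,
    ContinuousLinearMap.norm_units_inv_le_of_bound u hd (hu ▸ hbelow)⟩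
end

section
/- Let c, a, b > 0 and let A(c,a,b) = ic + [-a,a] + i[0,b] ⊂ ℂ. Let ϑ ∈ (0, π/2), ν = min(ϑ, arctan(c/(2a))), and ρ₀ > 0. Then for any g > 0, every w ∈ -g²A(c,a,b) + e^{-iϑ}[0,ρ₀] satisfies -Im w - (c/2)g² ≥ |Re w| tan(ν); in particular Im w ≤ -(c/2)g². -/
open Real

/-- The box `A(c,a,b) = ic + [-a,a] + i[0,b] ⊂ ℂ`. -/
def boxA (c a b : ℝ) : Set ℂ :=
  {w : ℂ | |w.re| ≤ a ∧ c ≤ w.im ∧ w.im ≤ c + b}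

/-- with `ν = min(ϑ, arctan(c/(2a)))`, every point
`w = -g²z + e^{-iϑ}t` with `z ∈ A(c,a,b)`, `t ∈ [0,ρ₀]` lies in the translated cone
`-i(c/2)g² - i{re^{iφ} : |φ| ≤ ν - π/2, r ≥ 0}`, i.e. `Im w ≤ -(c/2)g²` and
`|Re w|·tan ν ≤ -Im w - (c/2)g²`. -/
theorem cone_containment (c a b ϑ g ρ₀ : ℝ) (hc : 0 < c) (ha : 0 < a) (hb : 0 < b)
    (hϑ₀ : 0 < ϑ) (hϑ₁ : ϑ < π / 2) (hg : 0 < g) (hρ₀ : 0 < ρ₀) :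
    ∀ z ∈ boxA c a b, ∀ t ∈ Set.Icc (0 : ℝ) ρ₀,
      ((-(g ^ 2 : ℂ)) * z + (t : ℂ) * Complex.exp (-Complex.I * (ϑ : ℂ))).im ≤
          -(c / 2) * g ^ 2 ∧
      |((-(g ^ 2 : ℂ)) * z + (t : ℂ) * Complex.exp (-Complex.I * (ϑ : ℂ))).re| *
          Real.tan (min ϑ (Real.arctan (c / (2 * a)))) ≤
        -((-(g ^ 2 : ℂ)) * z + (t : ℂ) * Complex.exp (-Complex.I * (ϑ : ℂ))).im -
          (c / 2) * g ^ 2 := by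
  rintro z ⟨hx, hy1, hy2⟩ t ⟨ht0, ht1⟩
  have hcos : 0 < Real.cos ϑ :=
    Real.cos_pos_of_mem_Ioo ⟨by linarith [Real.pi_pos], hϑ₁⟩
  have hsin : 0 ≤ Real.sin ϑ :=
    Real.sin_nonneg_of_nonneg_of_le_pi hϑ₀.le (by linarith [Real.pi_pos])
  set ν := min ϑ (Real.arctan (c / (2 * a))) with hν
  have hν0 : 0 < ν := by
    refine lt_min hϑ₀ ?_
    have := Real.arctan_strictMono (show (0:ℝ) < c / (2 * a) by positivity)
    rwa [Real.arctan_zero] at this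
  have hν2 : ν < π / 2 := lt_of_le_of_lt (min_le_left _ _) hϑ₁
  have htanν0 : 0 ≤ Real.tan ν := (Real.tan_pos_of_pos_of_lt_pi_div_two hν0 hν2).le
  have htan1 : Real.tan ν ≤ Real.tan ϑ := by
    apply Real.strictMonoOn_tan.monotoneOn
    · exact ⟨by linarith, by linarith⟩
    · exact ⟨by linarith, hϑ₁⟩
    · exact min_le_left _ _
  have htan2 : Real.tan ν ≤ c / (2 * a) := by
    have : Real.tan ν ≤ Real.tan (Real.arctan (c / (2 * a))) := by
      apply Real.strictMonoOn_tan.monotoneOn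
      · exact ⟨by linarith, by linarith⟩
      · exact ⟨by linarith [Real.neg_pi_div_two_lt_arctan (c / (2 * a))],
          Real.arctan_lt_pi_div_two _⟩
      · exact min_le_right _ _
    rwa [Real.tan_arctan] at this
  have hsc : Real.cos ϑ * Real.tan ϑ = Real.sin ϑ := by
    rw [Real.tan_eq_sin_div_cos]; field_simp
  have hre : ((-(g ^ 2 : ℂ)) * z + (t : ℂ) * Complex.exp (-Complex.I * (ϑ : ℂ))).re
      = -(g ^ 2) * z.re + t * Real.cos ϑ := by
    simp [Complex.exp_re, Complex.exp_im, Complex.add_re, Complex.mul_re, Complex.mul_im,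
      ← Complex.ofReal_pow]
  have him : ((-(g ^ 2 : ℂ)) * z + (t : ℂ) * Complex.exp (-Complex.I * (ϑ : ℂ))).im
      = -(g ^ 2) * z.im - t * Real.sin ϑ := by
    simp [Complex.exp_re, Complex.exp_im, Complex.add_im, Complex.mul_re, Complex.mul_im,
      ← Complex.ofReal_pow]
    ring
  rw [hre, him]
  have hg2 : (0:ℝ) < g ^ 2 := by positivity
  have hyc : g ^ 2 * c ≤ g ^ 2 * z.im := mul_le_mul_of_nonneg_left hy1 hg2.le
  constructor
  · nlinarith [mul_nonneg ht0 hsin, hyc]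
  · have habs : |(-(g ^ 2) * z.re + t * Real.cos ϑ)| ≤ g ^ 2 * a + t * Real.cos ϑ := by
      rw [abs_le]
      have h1 : -a ≤ z.re := (abs_le.mp hx).1
      have h2 : z.re ≤ a := (abs_le.mp hx).2
      constructor <;> nlinarith [mul_nonneg ht0 hcos.le]
    have step : |(-(g ^ 2) * z.re + t * Real.cos ϑ)| * Real.tan ν
        ≤ (g ^ 2 * a + t * Real.cos ϑ) * Real.tan ν :=
      mul_le_mul_of_nonneg_right habs htanν0
    have haν : a * Real.tan ν ≤ c / 2 := by
      have h := mul_le_mul_of_nonneg_left htan2 ha.le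
      have he : a * (c / (2 * a)) = c / 2 := by field_simp
      linarith [he ▸ h]
    have h1 : g ^ 2 * (a * Real.tan ν) ≤ g ^ 2 * (c / 2) :=
      mul_le_mul_of_nonneg_left haν hg2.le
    have hct : Real.cos ϑ * Real.tan ν ≤ Real.sin ϑ := by
      calc Real.cos ϑ * Real.tan ν ≤ Real.cos ϑ * Real.tan ϑ :=
            mul_le_mul_of_nonneg_left htan1 hcos.le
        _ = Real.sin ϑ := hsc
    have h2 : t * (Real.cos ϑ * Real.tan ν) ≤ t * Real.sin ϑ :=
      mul_le_mul_of_nonneg_left hct ht0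
    have key : (g ^ 2 * a + t * Real.cos ϑ) * Real.tan ν
        ≤ g ^ 2 * (c / 2) + t * Real.sin ϑ := by
      calc (g ^ 2 * a + t * Real.cos ϑ) * Real.tan ν
          = g ^ 2 * (a * Real.tan ν) + t * (Real.cos ϑ * Real.tan ν) := by ring
        _ ≤ g ^ 2 * (c / 2) + t * Real.sin ϑ := add_le_add h1 h2
    calc |(-(g ^ 2) * z.re + t * Real.cos ϑ)| * Real.tan ν
        ≤ (g ^ 2 * a + t * Real.cos ϑ) * Real.tan ν := step
      _ ≤ g ^ 2 * (c / 2) + t * Real.sin ϑ := key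
      _ ≤ g ^ 2 * z.im + t * Real.sin ϑ - c / 2 * g ^ 2 := by linarith [hyc]
      _ = -(-g ^ 2 * z.im - t * Real.sin ϑ) - c / 2 * g ^ 2 := by ring
end

section
/- Geometric resolvent-distance estimate: let c, a, b > 0, ϑ ∈ (0, π/2), ν = min(ϑ, arctan(c/(2a))), g > 0, ρ₀ > 0, and S = -g²A(c,a,b) + e^{-iϑ}[0, ρ₀] ⊂ ℂ where A(c,a,b) = [-a,a] + i[c, c+b]. Then there is a constant C > 0 depending only on a, b, c such that for every real λ, dist(λ, S) ≥ (sin ν / C)·√(λ² + c²g⁴). -/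
set_option maxHeartbeats 1000000


open Real

/-- Key pointwise estimate: distance from a point in the upper half plane to a ray
going into the lower half plane at angle `ϑ`. -/
lemma key1 (lam X Y t s co : ℝ) (ht : 0 ≤ t) (hs : 0 ≤ s) (hY : 0 ≤ Y)
    (hsc : s ^ 2 + co ^ 2 = 1) :
    s ^ 2 * (lam + X) ^ 2 + s ^ 2 * Y ^ 2 ≤ (lam + X - t * co) ^ 2 + (Y + t * s) ^ 2 := by
  have e : (lam + X - t * co) ^ 2 + (Y + t * s) ^ 2
      = s ^ 2 * (lam + X) ^ 2 + s ^ 2 * Y ^ 2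
        + ((co * (lam + X) - t) ^ 2 + (co * Y) ^ 2 + 2 * (t * s * Y)) := by
    linear_combination (t ^ 2 - (lam + X) ^ 2 - Y ^ 2) * hsc
  rw [e]
  nlinarith [sq_nonneg (co * (lam + X) - t), sq_nonneg (co * Y),
    mul_nonneg (mul_nonneg ht hs) hY]

lemma key2 (a c g lam x : ℝ) (ha : 0 < a) (hc : 0 < c) (hg : 0 < g) (hx2 : x ^ 2 ≤ a ^ 2) :
    lam ^ 2 + c ^ 2 * g ^ 4 ≤
      ((2 * a + 3 * c) / c) ^ 2 * ((lam + g ^ 2 * x) ^ 2 + c ^ 2 * g ^ 4) := by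
  have hc2 : (0 : ℝ) < c ^ 2 := by positivity
  rw [div_pow, div_mul_eq_mul_div, le_div_iff₀ hc2]
  have hgx : g ^ 4 * x ^ 2 ≤ g ^ 4 * a ^ 2 :=
    mul_le_mul_of_nonneg_left hx2 (by positivity)
  nlinarith [sq_nonneg (lam + 2 * g ^ 2 * x), sq_nonneg (lam + g ^ 2 * x),
    mul_pos ha hc, sq_nonneg (g ^ 2), mul_nonneg (mul_pos ha hc).le (sq_nonneg (g ^ 2)),
    mul_nonneg (mul_pos hc hc).le (sq_nonneg (g ^ 2)),
    mul_nonneg (sq_nonneg (g^2)) (sq_nonneg (lam + g ^ 2 * x))]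

/-- geometric resolvent-distance estimate: with
`S = -g²A(c,a,b) + e^{-iϑ}[0,ρ₀]` and `ν = min(ϑ, arctan(c/(2a)))`, there is a constant
`C > 0` depending only on `a, b, c` such that for every real `λ`,
`dist(λ, S) ≥ (sin ν / C)·√(λ² + c²g⁴)`. -/
theorem resolvent_distance_estimate (a b c : ℝ) (ha : 0 < a) (hb : 0 < b) (hc : 0 < c) :
    ∃ C > (0 : ℝ), ∀ ϑ : ℝ, 0 < ϑ → ϑ < π / 2 → ∀ g > (0 : ℝ), ∀ ρ₀ > (0 : ℝ),
      ∀ lam : ℝ,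
        (Real.sin (min ϑ (Real.arctan (c / (2 * a)))) / C) *
            Real.sqrt (lam ^ 2 + c ^ 2 * g ^ 4) ≤
          Metric.infDist (lam : ℂ)
            {w : ℂ | ∃ z ∈ boxA c a b, ∃ t ∈ Set.Icc (0 : ℝ) ρ₀,
              w = (-(g ^ 2 : ℂ)) * z + (t : ℂ) * Complex.exp (-Complex.I * (ϑ : ℂ))} := by
  refine ⟨(2 * a + 3 * c) / c, by positivity, ?_⟩
  intro ϑ hϑ0 hϑ2 g hg ρ₀ hρ lam
  set C : ℝ := (2 * a + 3 * c) / c with hCdef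
  have hC : 0 < C := by positivity
  set ν : ℝ := min ϑ (Real.arctan (c / (2 * a))) with hνdef
  clear_value C
  have hν0 : 0 < ν := lt_min hϑ0 (by simpa [Real.arctan_zero] using Real.arctan_strictMono (show (0:ℝ) < c / (2 * a) by positivity))
  have hνϑ : ν ≤ ϑ := min_le_left _ _
  have hsinν : Real.sin ν ≤ Real.sin ϑ :=
    Real.strictMonoOn_sin.monotoneOn
      ⟨by linarith [Real.pi_pos], by linarith⟩
      ⟨by linarith [Real.pi_pos], hϑ2.le⟩ hνϑ
  have hsinϑ0 : 0 ≤ Real.sin ϑ := Real.sin_nonneg_of_nonneg_of_le_pi hϑ0.le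
    (by linarith [Real.pi_pos])
  have hsinν0 : 0 ≤ Real.sin ν := Real.sin_nonneg_of_nonneg_of_le_pi hν0.le
    (by linarith [Real.pi_pos])
  -- the set is nonempty
  have hne : {w : ℂ | ∃ z ∈ boxA c a b, ∃ t ∈ Set.Icc (0 : ℝ) ρ₀,
      w = (-(g ^ 2 : ℂ)) * z + (t : ℂ) * Complex.exp (-Complex.I * (ϑ : ℂ))}.Nonempty := by
    refine ⟨(-(g ^ 2 : ℂ)) * Complex.I * c + 0 * Complex.exp (-Complex.I * (ϑ : ℂ)),
      Complex.I * c, ⟨?_, ?_, ?_⟩, 0, ⟨le_refl 0, hρ.le⟩, by push_cast; ring_nf⟩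
    · simp [ha.le]
    · simp
    · simp; linarith
  -- reduce to a pointwise bound
  rw [← not_lt]
  intro hlt
  obtain ⟨w, hw, hd⟩ := (Metric.infDist_lt_iff hne).1 hlt
  obtain ⟨z, ⟨hzre, hzim1, hzim2⟩, t, ⟨ht0, htρ⟩, rfl⟩ := hw
  refine absurd hd (not_lt.2 ?_)
  rw [Complex.dist_eq]
  -- compute the real and imaginary part
  have hre : ((lam : ℂ) - ((-(g ^ 2 : ℂ)) * z + (t : ℂ) * Complex.exp (-Complex.I * (ϑ : ℂ)))).re
      = lam + g ^ 2 * z.re - t * Real.cos ϑ := by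
    simp [Complex.exp_re, Complex.sub_re, Complex.add_re, Complex.mul_re, Complex.mul_im,
      Complex.exp_im, pow_two]
    ring
  have him : ((lam : ℂ) - ((-(g ^ 2 : ℂ)) * z + (t : ℂ) * Complex.exp (-Complex.I * (ϑ : ℂ)))).im
      = g ^ 2 * z.im + t * Real.sin ϑ := by
    simp [Complex.exp_re, Complex.sub_im, Complex.add_im, Complex.mul_re, Complex.mul_im,
      Complex.exp_im, pow_two]
    ring
  rw [Complex.norm_def, Complex.normSq_apply, hre, him,
    show (lam + g ^ 2 * z.re - t * Real.cos ϑ) * (lam + g ^ 2 * z.re - t * Real.cos ϑ)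
        + (g ^ 2 * z.im + t * Real.sin ϑ) * (g ^ 2 * z.im + t * Real.sin ϑ)
      = (lam + g ^ 2 * z.re - t * Real.cos ϑ) ^ 2 + (g ^ 2 * z.im + t * Real.sin ϑ) ^ 2
      from by ring]
  -- now a purely real estimate
  have hsc : Real.sin ϑ ^ 2 + Real.cos ϑ ^ 2 = 1 := Real.sin_sq_add_cos_sq ϑ
  have hx2 : z.re ^ 2 ≤ a ^ 2 := sq_le_sq' (by linarith [abs_le.1 hzre]) (abs_le.1 hzre).2
  have h1c : c ^ 2 ≤ z.im ^ 2 := by nlinarith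
  have hy2 : c ^ 2 * g ^ 4 ≤ (g ^ 2 * z.im) ^ 2 := by
    nlinarith [mul_le_mul_of_nonneg_left h1c (by positivity : (0:ℝ) ≤ g ^ 4)]
  have hkey : (Real.sin ϑ / C) ^ 2 * (lam ^ 2 + c ^ 2 * g ^ 4) ≤
      (lam + g ^ 2 * z.re - t * Real.cos ϑ) ^ 2 + (g ^ 2 * z.im + t * Real.sin ϑ) ^ 2 := by
    have h2 := key2 a c g lam z.re ha hc hg hx2
    rw [← hCdef] at h2
    have h1 := key1 lam (g ^ 2 * z.re) (g ^ 2 * z.im) t (Real.sin ϑ) (Real.cos ϑ)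
      ht0 hsinϑ0 (mul_nonneg (sq_nonneg g) (hc.le.trans hzim1)) hsc
    have hCsq : 0 < C ^ 2 := by positivity
    have hdiv : (lam ^ 2 + c ^ 2 * g ^ 4) / C ^ 2 ≤ (lam + g ^ 2 * z.re) ^ 2 + c ^ 2 * g ^ 4 :=
      (div_le_iff₀ hCsq).2 (by linarith [h2])
    rw [show (Real.sin ϑ / C) ^ 2 * (lam ^ 2 + c ^ 2 * g ^ 4)
        = Real.sin ϑ ^ 2 * ((lam ^ 2 + c ^ 2 * g ^ 4) / C ^ 2) from by
      rw [div_pow]; ring]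
    have hs2 : Real.sin ϑ ^ 2 * ((lam ^ 2 + c ^ 2 * g ^ 4) / C ^ 2)
        ≤ Real.sin ϑ ^ 2 * ((lam + g ^ 2 * z.re) ^ 2 + c ^ 2 * g ^ 4) :=
      mul_le_mul_of_nonneg_left hdiv (sq_nonneg _)
    have hs3 := mul_le_mul_of_nonneg_left hy2 (sq_nonneg (Real.sin ϑ))
    nlinarith [hs2, hs3, h1]
  have hQ : (0:ℝ) ≤ lam ^ 2 + c ^ 2 * g ^ 4 := by positivity
  have hsC : 0 ≤ Real.sin ϑ / C := div_nonneg hsinϑ0 hC.le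
  calc Real.sin ν / C * Real.sqrt (lam ^ 2 + c ^ 2 * g ^ 4)
      ≤ Real.sin ϑ / C * Real.sqrt (lam ^ 2 + c ^ 2 * g ^ 4) :=
        mul_le_mul_of_nonneg_right ((div_le_div_iff_of_pos_right hC).2 hsinν) (Real.sqrt_nonneg _)
    _ = Real.sqrt ((Real.sin ϑ / C) ^ 2 * (lam ^ 2 + c ^ 2 * g ^ 4)) := by
        rw [Real.sqrt_mul (sq_nonneg _), Real.sqrt_sq hsC]
    _ ≤ _ := Real.sqrt_le_sqrt hkey
end
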